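/- (Model identification for the Lasso.) Let Φ : ℝ^N → ℝ^P be linear with columns φ₁,…,φ_N, and x₀ ∈ ℝ^N with I = supp(x₀). Assume (φ_i)_{i∈I} is linearly independent and ‖Φ_{I^c}^⊤ Φ_I (Φ_I^⊤Φ_I)^{-1} sign(x₀)_I‖_∞ < 1. Then there exist constants C > 0 and C' > 0 such that for every λ and w with 0 < λ ≤ C and ‖w‖ ≤ Cλ, setting y = Φx₀ + w, the problem min_x (1/(2λ))‖Φx − y‖² + ‖x‖₁ has a unique minimizer x⋆, which satisfies supp(x⋆) ⊆ supp(x₀) and ‖x⋆ − x₀‖ ≤ C'·max(λ, ‖w‖). -/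

import Mathlib

open Matrix

/-- Euclidean dot product on `ℝ^n`. -/
noncomputable def dotp {n : ℕ} (u v : Fin n → ℝ) : ℝ := ∑ i, u i * v i

/-- Euclidean (ℓ²) norm on `ℝ^n`. -/
noncomputable def nrm2 {n : ℕ} (u : Fin n → ℝ) : ℝ := Real.sqrt (∑ i, (u i) ^ 2)

/-- ℓ¹ norm on `ℝ^n`. -/
noncomputable def l1norm {n : ℕ} (u : Fin n → ℝ) : ℝ := ∑ i, |u i|

/-- ℓ^∞ norm of a finitely indexed real vector. -/
noncomputable def linf {ι : Type*} [Fintype ι] (u : ι → ℝ) : ℝ := ⨆ i, |u i|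

/-- The sign function: 1 for positive, -1 for negative, 0 at 0. -/
noncomputable def sgn (t : ℝ) : ℝ := if 0 < t then 1 else if t < 0 then -1 else 0

/-- Subdifferential of a finite-valued function `J : ℝ^n → ℝ` at `x`:
`∂J(x) = {η : J(x+δ) ≥ J(x) + ⟨η,δ⟩ for all δ}`. -/
def subdiff {n : ℕ} (J : (Fin n → ℝ) → ℝ) (x : Fin n → ℝ) : Set (Fin n → ℝ) :=
  {η | ∀ δ, J x + dotp η δ ≤ J (x + δ)}

/-- The model tangent subspace `T_x = Lin(∂J(x))^⊥`, where `Lin(E)` is the linear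
space parallel to the affine hull of `E`. -/
def modelT {n : ℕ} (J : (Fin n → ℝ) → ℝ) (x : Fin n → ℝ) : Set (Fin n → ℝ) :=
  {u | ∀ v ∈ (affineSpan ℝ (subdiff J x)).direction, dotp u v = 0}

/-- Support of `x` as a finite set of indices. -/
noncomputable def suppF {n : ℕ} (x : Fin n → ℝ) : Finset (Fin n) :=
  Finset.univ.filter fun i => x i ≠ 0

/-- The submatrix `Φ_I` of columns of `Φ` indexed by `I`. -/
noncomputable def colsub {N P : ℕ} (Φ : Matrix (Fin P) (Fin N) ℝ) (I : Finset (Fin N)) :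
    Matrix (Fin P) ↥I ℝ := Φ.submatrix id (↑)

/-- The vector `p_F = Φ_I (Φ_I^⊤ Φ_I)⁻¹ s` for a sign vector `s` on `I`. -/
noncomputable def pFvec {N P : ℕ} (Φ : Matrix (Fin P) (Fin N) ℝ) (I : Finset (Fin N))
    (s : ↥I → ℝ) : Fin P → ℝ :=
  (colsub Φ I).mulVec ((((colsub Φ I)ᵀ * (colsub Φ I))⁻¹).mulVec s)

/-- The irrepresentable-condition quantity `‖Φ_{I^c}^⊤ Φ_I (Φ_I^⊤Φ_I)⁻¹ s‖_∞`. -/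
noncomputable def ICval {N P : ℕ} (Φ : Matrix (Fin P) (Fin N) ℝ) (I : Finset (Fin N))
    (s : ↥I → ℝ) : ℝ :=
  linf ((Φ.submatrix id ((↑) : {j // j ∉ I} → Fin N))ᵀ.mulVec (pFvec Φ I s))

/-!
The candidate is the oracle solution `x̂ = Φ_I⁺ y - λ (Φ_Iᵀ Φ_I)⁻¹ s`, supported on `I`, for which
`η = Φᵀ (y - Φ x̂) / λ` equals `s` on `I`. Off `I`, `η` is `Φ_{I^c}ᵀ p_F` (bounded by the
irrepresentable constant) plus a term of size `O(‖w‖ / λ)`, so `|η_j| < 1` once `‖w‖ ≤ C λ`;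
and `x̂ - x₀ = O(max(λ, ‖w‖))`, so for `λ ≤ C` the oracle keeps the signs of `x₀`, i.e.
`⟨η, x̂⟩ = ‖x̂‖₁`. Such a dual certificate turns the Lasso objective `F` into
`F(x) = F(x̂) + (‖x‖₁ - ⟨η, x⟩) + ‖Φ (x - x̂)‖² / (2λ)`, whence minimality; a second minimizer
vanishes off `I` (where `|η_j| < 1`) and has the same image under `Φ`, so it equals `x̂` by
injectivity of `Φ_I`.
-/

open scoped Matrix.Norms.L2Operator

section Norms

variable {m n : ℕ}

lemma nrm2_eq_norm (u : Fin n → ℝ) : nrm2 u = ‖(EuclideanSpace.equiv (Fin n) ℝ).symm u‖ := by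
  simp [nrm2, EuclideanSpace.norm_eq]

lemma nrm2_nonneg (u : Fin n → ℝ) : 0 ≤ nrm2 u := Real.sqrt_nonneg _

lemma nrm2_sq (u : Fin n → ℝ) : nrm2 u ^ 2 = u ⬝ᵥ u := by
  rw [nrm2, Real.sq_sqrt (Finset.sum_nonneg fun i _ => sq_nonneg _)]
  simp [dotProduct, sq]

lemma abs_le_nrm2 (u : Fin n → ℝ) (i : Fin n) : |u i| ≤ nrm2 u := by
  simpa [nrm2_eq_norm] using PiLp.norm_apply_le ((EuclideanSpace.equiv (Fin n) ℝ).symm u) i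

lemma nrm2_sub_le (u v : Fin n → ℝ) : nrm2 (u - v) ≤ nrm2 u + nrm2 v := by
  simpa [nrm2_eq_norm] using norm_sub_le ((EuclideanSpace.equiv (Fin n) ℝ).symm u) _

lemma nrm2_smul (c : ℝ) (u : Fin n → ℝ) : nrm2 (c • u) = |c| * nrm2 u := by
  simpa [nrm2_eq_norm] using norm_smul c ((EuclideanSpace.equiv (Fin n) ℝ).symm u)

lemma nrm2_mulVec_le (A : Matrix (Fin m) (Fin n) ℝ) (v : Fin n → ℝ) :
    nrm2 (A *ᵥ v) ≤ ‖A‖ * nrm2 v := by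
  simpa [nrm2_eq_norm] using A.l2_opNorm_mulVec ((EuclideanSpace.equiv (Fin n) ℝ).symm v)

end Norms

lemma abs_sgn_le_one (t : ℝ) : |sgn t| ≤ 1 := by
  unfold sgn; split_ifs <;> norm_num

lemma sgn_mul_eq_abs_of_abs_sub_le {a b : ℝ} (h : |b - a| ≤ |a|) : sgn a * b = |b| := by
  have h' := abs_le.mp h
  rcases lt_trichotomy a 0 with ha | rfl | ha
  · rw [abs_of_neg ha] at h'
    rw [sgn, if_neg ha.not_gt, if_pos ha, abs_of_nonpos (by linarith)]
    ring
  · obtain rfl : b = 0 := by simpa using h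
    simp
  · rw [abs_of_pos ha] at h'
    rw [sgn, if_pos ha, abs_of_nonneg (by linarith), one_mul]

lemma exists_pos_le_abs_of_ne_zero {n : ℕ} (x : Fin n → ℝ) :
    ∃ m > 0, ∀ i, x i ≠ 0 → m ≤ |x i| := by
  set S := insert 1 ((Finset.univ.filter (x · ≠ 0)).image (|x ·|))
  refine ⟨S.min' (Finset.insert_nonempty _ _), ?_, fun i hi =>
    S.min'_le _ (Finset.mem_insert_of_mem (Finset.mem_image_of_mem _ (by simpa using hi)))⟩
  rw [gt_iff_lt, Finset.lt_min'_iff]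
  intro t ht
  simp only [S, Finset.mem_insert, Finset.mem_image, Finset.mem_filter] at ht
  rcases ht with rfl | ⟨i, ⟨_, hi⟩, rfl⟩
  exacts [one_pos, abs_pos.mpr hi]

lemma exists_pos_small_regime {κ Kx Kr m : ℝ} (hκ : κ < 1) (hKx : 0 < Kx) (hKr : 0 ≤ Kr)
    (hm : 0 < m) : ∃ C > 0, ∀ lam ν : ℝ, 0 < lam → lam ≤ C → ν ≤ C * lam →
      Kx * max lam ν ≤ m ∧ Kr * ν + lam * κ < lam := by
  set C := min 1 (min ((1 - κ) / (Kr + 1)) (m / Kx))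
  have hC1 : C ≤ 1 := min_le_left _ _
  have hCr : C * (Kr + 1) ≤ 1 - κ :=
    (le_div_iff₀ (by linarith)).mp ((min_le_right _ _).trans (min_le_left _ _))
  have hCm : C * Kx ≤ m := (le_div_iff₀ hKx).mp ((min_le_right _ _).trans (min_le_right _ _))
  have hC : 0 < C := lt_min one_pos (lt_min (div_pos (by linarith) (by linarith)) (div_pos hm hKx))
  refine ⟨C, hC, fun lam ν hlam hlamC hν => ⟨?_, by nlinarith⟩⟩
  calc Kx * max lam ν ≤ Kx * C := by gcongr; exact max_le hlamC (by nlinarith)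
    _ ≤ m := by linarith

section ExtByZero

variable {N P : ℕ} (I : Finset (Fin N))

noncomputable def extByZero : Matrix (Fin N) ↥I ℝ :=
  (1 : Matrix (Fin N) (Fin N) ℝ).submatrix id (↑)

lemma colsub_eq_mul_extByZero (Φ : Matrix (Fin P) (Fin N) ℝ) : colsub Φ I = Φ * extByZero I := by
  ext p i
  simp [colsub, extByZero, mul_apply, one_apply]

variable {I}

lemma extByZero_mulVec_apply (v : ↥I → ℝ) (j : Fin N) :
    (extByZero I *ᵥ v) j = if h : j ∈ I then v ⟨j, h⟩ else 0 := by
  simp only [extByZero, mulVec, dotProduct, submatrix_apply, id_eq, one_apply, ite_mul, one_mul,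
    zero_mul]
  split_ifs with hj
  · rw [Fintype.sum_eq_single ⟨j, hj⟩ fun i hi => if_neg fun h => hi (Subtype.ext h.symm)]
    simp
  · exact Finset.sum_eq_zero fun i _ => if_neg fun h : j = i => hj (h ▸ i.2)

lemma extByZero_mulVec_transpose_mulVec {x : Fin N → ℝ} (hx : ∀ j ∉ I, x j = 0) :
    extByZero I *ᵥ ((extByZero I)ᵀ *ᵥ x) = x := by
  ext j
  rw [extByZero_mulVec_apply]
  split_ifs with hj
  · simp [extByZero, mulVec, dotProduct, one_apply]
  · exact (hx j hj).symm

lemma eq_zero_of_mulVec_eq_zero {Φ : Matrix (Fin P) (Fin N) ℝ}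
    (hinj : Function.Injective (colsub Φ I).mulVec) {d : Fin N → ℝ} (hd : ∀ j ∉ I, d j = 0)
    (h : Φ *ᵥ d = 0) : d = 0 := by
  have hres : (extByZero I)ᵀ *ᵥ d = 0 := hinj <| by
    rw [colsub_eq_mul_extByZero, ← mulVec_mulVec, extByZero_mulVec_transpose_mulVec hd, h,
      mulVec_zero]
  rw [← extByZero_mulVec_transpose_mulVec hd, hres, mulVec_zero]

end ExtByZero

section Lasso

variable {N P : ℕ} (Φ : Matrix (Fin P) (Fin N) ℝ) (y : Fin P → ℝ) (lam : ℝ)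

noncomputable def lassoObj (x : Fin N → ℝ) : ℝ :=
  1 / (2 * lam) * nrm2 (Φ *ᵥ x - y) ^ 2 + l1norm x

lemma mul_le_abs_of_abs_le_one {a b : ℝ} (ha : |a| ≤ 1) : a * b ≤ |b| := calc
  a * b ≤ |a| * |b| := by rw [← abs_mul]; exact le_abs_self _
  _ ≤ |b| := mul_le_of_le_one_left (abs_nonneg _) ha

lemma dotProduct_le_l1norm {η : Fin N → ℝ} (hη : ∀ i, |η i| ≤ 1) (x : Fin N → ℝ) :
    η ⬝ᵥ x ≤ l1norm x :=
  Finset.sum_le_sum fun i _ => mul_le_abs_of_abs_le_one (hη i)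

lemma eq_zero_of_dotProduct_eq_l1norm {η x : Fin N → ℝ} (hη : ∀ i, |η i| ≤ 1)
    (h : η ⬝ᵥ x = l1norm x) {j : Fin N} (hj : |η j| < 1) : x j = 0 := by
  have hterm : ∀ i ∈ Finset.univ, 0 ≤ |x i| - η i * x i := fun i _ =>
    sub_nonneg.mpr (mul_le_abs_of_abs_le_one (hη i))
  have hj_eq : |x j| - η j * x j = 0 :=
    (Finset.sum_eq_zero_iff_of_nonneg hterm).mp
      (by rw [Finset.sum_sub_distrib]; exact sub_eq_zero.mpr h.symm) j (Finset.mem_univ j)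
  by_contra hx
  have : η j * x j < |x j| := calc
    η j * x j ≤ |η j| * |x j| := by rw [← abs_mul]; exact le_abs_self _
    _ < |x j| := mul_lt_of_lt_one_left (abs_pos.mpr hx) hj
  linarith

lemma lassoObj_eq_of_certificate {xs η : Fin N → ℝ} (hlam : lam ≠ 0)
    (hcert : Φᵀ *ᵥ (y - Φ *ᵥ xs) = lam • η) (x : Fin N → ℝ) :
    lassoObj Φ y lam x = lassoObj Φ y lam xs + (l1norm x - η ⬝ᵥ x) - (l1norm xs - η ⬝ᵥ xs)
      + 1 / (2 * lam) * nrm2 (Φ *ᵥ (x - xs)) ^ 2 := by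
  have hcross : (y - Φ *ᵥ xs) ⬝ᵥ Φ *ᵥ (x - xs) = lam * (η ⬝ᵥ x - η ⬝ᵥ xs) := by
    rw [dotProduct_mulVec, ← mulVec_transpose, hcert, smul_dotProduct, dotProduct_sub,
      smul_eq_mul]
  have hsplit : Φ *ᵥ x - y = Φ *ᵥ (x - xs) - (y - Φ *ᵥ xs) := by
    rw [mulVec_sub]; abel
  have hneg : Φ *ᵥ xs - y = -(y - Φ *ᵥ xs) := (neg_sub _ _).symm
  simp only [lassoObj, nrm2_sq, hsplit, hneg]
  generalize Φ *ᵥ (x - xs) = d, y - Φ *ᵥ xs = r at hcross ⊢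
  simp only [sub_dotProduct, dotProduct_sub, neg_dotProduct, dotProduct_neg, neg_neg,
    dotProduct_comm d r, hcross]
  field_simp
  ring

variable {Φ y lam} {xs η : Fin N → ℝ}

theorem lassoObj_le_of_certificate (hlam : 0 < lam) (hcert : Φᵀ *ᵥ (y - Φ *ᵥ xs) = lam • η)
    (hη : ∀ i, |η i| ≤ 1) (hsign : η ⬝ᵥ xs = l1norm xs) (x : Fin N → ℝ) :
    lassoObj Φ y lam xs ≤ lassoObj Φ y lam x := by
  rw [lassoObj_eq_of_certificate Φ y lam hlam.ne' hcert x, hsign, sub_self, sub_zero]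
  have := dotProduct_le_l1norm hη x
  have : 0 ≤ 1 / (2 * lam) * nrm2 (Φ *ᵥ (x - xs)) ^ 2 := by positivity
  linarith

theorem eq_of_lassoObj_le_of_certificate {I : Finset (Fin N)} (hlam : 0 < lam)
    (hcert : Φᵀ *ᵥ (y - Φ *ᵥ xs) = lam • η) (hη : ∀ i, |η i| ≤ 1)
    (hsign : η ⬝ᵥ xs = l1norm xs) (hηI : ∀ j ∉ I, |η j| < 1) (hxs : ∀ j ∉ I, xs j = 0)
    (hinj : Function.Injective (colsub Φ I).mulVec) {x : Fin N → ℝ}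
    (hx : lassoObj Φ y lam x ≤ lassoObj Φ y lam xs) : x = xs := by
  rw [lassoObj_eq_of_certificate Φ y lam hlam.ne' hcert x, hsign, sub_self, sub_zero] at hx
  have hl1 := dotProduct_le_l1norm hη x
  have hfit : 0 ≤ nrm2 (Φ *ᵥ (x - xs)) ^ 2 := sq_nonneg _
  have hcoef : 0 < 1 / (2 * lam) := by positivity
  have hx_eq : η ⬝ᵥ x = l1norm x := by nlinarith
  have hΦ : Φ *ᵥ (x - xs) = 0 := by
    have : nrm2 (Φ *ᵥ (x - xs)) ^ 2 = 0 := by nlinarith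
    rwa [nrm2_sq, dotProduct_self_eq_zero] at this
  have hsupp : ∀ j ∉ I, (x - xs) j = 0 := fun j hj => by
    simp [eq_zero_of_dotProduct_eq_l1norm hη hx_eq (hηI j hj), hxs j hj]
  exact sub_eq_zero.mp (eq_zero_of_mulVec_eq_zero hinj hsupp hΦ)

end Lasso

section Oracle

variable {N P : ℕ} (Φ : Matrix (Fin P) (Fin N) ℝ) (I : Finset (Fin N))

noncomputable def colGram : Matrix ↥I ↥I ℝ := (colsub Φ I)ᵀ * colsub Φ I

lemma isUnit_det_colGram (hinj : Function.Injective (colsub Φ I).mulVec) :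
    IsUnit (colGram Φ I).det := by
  rw [← isUnit_iff_isUnit_det, ← mulVec_injective_iff_isUnit, ← coe_mulVecLin,
    ← LinearMap.ker_eq_bot, colGram, ker_mulVecLin_transpose_mul_self, LinearMap.ker_eq_bot,
    coe_mulVecLin]
  exact hinj

noncomputable def oracleSol (s : ↥I → ℝ) (y : Fin P → ℝ) (lam : ℝ) : Fin N → ℝ :=
  extByZero I *ᵥ ((colGram Φ I)⁻¹ *ᵥ ((colsub Φ I)ᵀ *ᵥ y - lam • s))

variable {Φ I} (s : ↥I → ℝ) (lam : ℝ)

lemma oracleSol_of_notMem (y : Fin P → ℝ) {j : Fin N} (hj : j ∉ I) :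
    oracleSol Φ I s y lam j = 0 := by
  rw [oracleSol, extByZero_mulVec_apply, dif_neg hj]

lemma mulVec_oracleSol (y : Fin P → ℝ) :
    Φ *ᵥ oracleSol Φ I s y lam =
      colsub Φ I *ᵥ ((colGram Φ I)⁻¹ *ᵥ ((colsub Φ I)ᵀ *ᵥ y - lam • s)) := by
  rw [oracleSol, mulVec_mulVec, ← colsub_eq_mul_extByZero]

lemma inv_colGram_mulVec_transpose_mulVec (hG : IsUnit (colGram Φ I).det) (v : ↥I → ℝ) :
    (colGram Φ I)⁻¹ *ᵥ ((colsub Φ I)ᵀ *ᵥ (colsub Φ I *ᵥ v)) = v := by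
  rw [mulVec_mulVec, mulVec_mulVec, Matrix.mul_assoc, ← colGram, nonsing_inv_mul _ hG, one_mulVec]

lemma transpose_mulVec_mulVec_inv_colGram (hG : IsUnit (colGram Φ I).det) (v : ↥I → ℝ) :
    (colsub Φ I)ᵀ *ᵥ (colsub Φ I *ᵥ ((colGram Φ I)⁻¹ *ᵥ v)) = v := by
  rw [mulVec_mulVec, mulVec_mulVec, ← colGram, mul_nonsing_inv _ hG, one_mulVec]

lemma oracleSol_add_mulVec (hG : IsUnit (colGram Φ I).det) {x₀ : Fin N → ℝ}
    (hx₀ : ∀ j ∉ I, x₀ j = 0) (w : Fin P → ℝ) :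
    oracleSol Φ I s (Φ *ᵥ x₀ + w) lam = x₀ + oracleSol Φ I s w lam := by
  have hΦx₀ : Φ *ᵥ x₀ = colsub Φ I *ᵥ ((extByZero I)ᵀ *ᵥ x₀) := by
    rw [colsub_eq_mul_extByZero, ← mulVec_mulVec, extByZero_mulVec_transpose_mulVec hx₀]
  rw [oracleSol, oracleSol, mulVec_add, add_sub_assoc, mulVec_add, mulVec_add, hΦx₀,
    inv_colGram_mulVec_transpose_mulVec hG, extByZero_mulVec_transpose_mulVec hx₀]

lemma exists_nrm2_oracleSol_le :
    ∃ K > 0, ∀ lam ≥ 0, ∀ w : Fin P → ℝ,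
      nrm2 (oracleSol Φ I s w lam) ≤ K * max lam (nrm2 w) := by
  set B := extByZero I * (colGram Φ I)⁻¹ * (colsub Φ I)ᵀ
  set d := extByZero I *ᵥ ((colGram Φ I)⁻¹ *ᵥ s)
  refine ⟨‖B‖ + nrm2 d + 1, by linarith [norm_nonneg B, nrm2_nonneg d], fun lam hlam w => ?_⟩
  have hdecomp : oracleSol Φ I s w lam = B *ᵥ w - lam • d := by
    rw [oracleSol, mulVec_sub, mulVec_sub, mulVec_smul, mulVec_smul, mulVec_mulVec, mulVec_mulVec]
  have hw := le_max_right lam (nrm2 w)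
  have hl := le_max_left lam (nrm2 w)
  calc nrm2 (oracleSol Φ I s w lam) ≤ ‖B‖ * nrm2 w + lam * nrm2 d := by
        rw [hdecomp]
        refine (nrm2_sub_le _ _).trans ?_
        rw [nrm2_smul, abs_of_nonneg hlam]
        exact add_le_add (nrm2_mulVec_le _ _) le_rfl
    _ ≤ (‖B‖ + nrm2 d + 1) * max lam (nrm2 w) := by
        nlinarith [norm_nonneg B, nrm2_nonneg d, nrm2_nonneg w]

lemma transpose_mulVec_oracle_residual (w : Fin P → ℝ) :
    Φᵀ *ᵥ (w - Φ *ᵥ oracleSol Φ I s w lam)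
      = (Φᵀ * (1 - colsub Φ I * (colGram Φ I)⁻¹ * (colsub Φ I)ᵀ)) *ᵥ w
        + lam • Φᵀ *ᵥ pFvec Φ I s := by
  rw [pFvec, ← colGram]
  simp only [mulVec_oracleSol, ← mulVec_mulVec, sub_mulVec, one_mulVec, mulVec_sub, mulVec_smul]
  abel

lemma colsub_transpose_mulVec_oracle_residual (hG : IsUnit (colGram Φ I).det) (y : Fin P → ℝ) :
    (colsub Φ I)ᵀ *ᵥ (y - Φ *ᵥ oracleSol Φ I s y lam) = lam • s := by
  rw [mulVec_oracleSol, mulVec_sub, transpose_mulVec_mulVec_inv_colGram hG, sub_sub_cancel]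

lemma abs_transpose_mulVec_pFvec_le_ICval {j : Fin N} (hj : j ∉ I) :
    |(Φᵀ *ᵥ pFvec Φ I s) j| ≤ ICval Φ I s :=
  le_ciSup (f := fun j' : {j // j ∉ I} =>
      |((Φ.submatrix id ((↑) : {j // j ∉ I} → Fin N))ᵀ *ᵥ pFvec Φ I s) j'|)
    (Set.finite_range _).bddAbove ⟨j, hj⟩

lemma exists_abs_oracle_residual_le :
    ∃ K ≥ 0, ∀ lam ≥ 0, ∀ (w : Fin P → ℝ) (j : Fin N), j ∉ I →
      |(Φᵀ *ᵥ (w - Φ *ᵥ oracleSol Φ I s w lam)) j| ≤ K * nrm2 w + lam * ICval Φ I s := by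
  set M := Φᵀ * (1 - colsub Φ I * (colGram Φ I)⁻¹ * (colsub Φ I)ᵀ)
  refine ⟨‖M‖, norm_nonneg M, fun lam hlam w j hj => ?_⟩
  rw [transpose_mulVec_oracle_residual, Pi.add_apply, Pi.smul_apply, smul_eq_mul]
  calc _ ≤ |(M *ᵥ w) j| + |lam * (Φᵀ *ᵥ pFvec Φ I s) j| := abs_add_le _ _
    _ ≤ ‖M‖ * nrm2 w + lam * ICval Φ I s := by
        rw [abs_mul, abs_of_nonneg hlam]
        gcongr
        · exact (abs_le_nrm2 _ j).trans (nrm2_mulVec_le M w)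
        · exact abs_transpose_mulVec_pFvec_le_ICval s hj

theorem oracleSol_lasso_unique_min (hinj : Function.Injective (colsub Φ I).mulVec)
    {y : Fin P → ℝ} (hlam : 0 < lam) (hs : ∀ i, |s i| ≤ 1)
    (hsign : ∀ i : ↥I, s i * oracleSol Φ I s y lam i = |oracleSol Φ I s y lam i|)
    (hoff : ∀ j ∉ I, |(Φᵀ *ᵥ (y - Φ *ᵥ oracleSol Φ I s y lam)) j| < lam) :
    (∀ x, lassoObj Φ y lam (oracleSol Φ I s y lam) ≤ lassoObj Φ y lam x) ∧
      ∀ x, (∀ x', lassoObj Φ y lam x ≤ lassoObj Φ y lam x') → x = oracleSol Φ I s y lam := by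
  set xs := oracleSol Φ I s y lam
  set η : Fin N → ℝ := lam⁻¹ • Φᵀ *ᵥ (y - Φ *ᵥ xs) with hη
  have hcert : Φᵀ *ᵥ (y - Φ *ᵥ xs) = lam • η := by rw [hη, smul_inv_smul₀ hlam.ne']
  have hηI : ∀ i : ↥I, η i = s i := fun i => by
    change lam⁻¹ • ((colsub Φ I)ᵀ *ᵥ (y - Φ *ᵥ xs)) i = s i
    rw [colsub_transpose_mulVec_oracle_residual s lam (isUnit_det_colGram Φ I hinj),
      Pi.smul_apply, smul_smul, inv_mul_cancel₀ hlam.ne', one_smul]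
  have hηoff : ∀ j ∉ I, |η j| < 1 := fun j hj => by
    rw [hη, Pi.smul_apply, smul_eq_mul, abs_mul, abs_inv, abs_of_pos hlam, inv_mul_lt_one₀ hlam]
    exact hoff j hj
  have hη1 : ∀ j, |η j| ≤ 1 := fun j => by
    by_cases hj : j ∈ I
    · simpa only [← hηI ⟨j, hj⟩] using hs ⟨j, hj⟩
    · exact (hηoff j hj).le
  have hηxs : η ⬝ᵥ xs = l1norm xs := Finset.sum_congr rfl fun j _ => by
    by_cases hj : j ∈ I
    · simpa only [← hηI ⟨j, hj⟩] using hsign ⟨j, hj⟩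
    · simp [xs, oracleSol_of_notMem s lam y hj]
  exact ⟨lassoObj_le_of_certificate hlam hcert hη1 hηxs, fun x hx =>
    eq_of_lassoObj_le_of_certificate hlam hcert hη1 hηxs hηoff
      (fun j hj => oracleSol_of_notMem s lam y hj) hinj (hx xs)⟩

end Oracle

/-- model identification for the Lasso. Under injectivity of `Φ_I`
and the irrepresentable condition, for `0 < λ ≤ C` and `‖w‖ ≤ Cλ`, the Lasso has
a unique minimizer `x⋆` with `supp(x⋆) ⊆ supp(x₀)` and
`‖x⋆ − x₀‖ ≤ C'·max(λ,‖w‖)`. -/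
theorem stmt12 {N P : ℕ} (Φ : Matrix (Fin P) (Fin N) ℝ) (x₀ : Fin N → ℝ)
    (hli : LinearIndependent ℝ (fun i : ↥(suppF x₀) => Φᵀ (i : Fin N)))
    (hIC : ICval Φ (suppF x₀) (fun i => sgn (x₀ i)) < 1) :
    ∃ C > (0:ℝ), ∃ C' > (0:ℝ), ∀ (lam : ℝ) (w : Fin P → ℝ),
      0 < lam → lam ≤ C → nrm2 w ≤ C * lam →
      ∃ xs : Fin N → ℝ,
        (∀ x, (1 / (2 * lam)) * nrm2 (Φ.mulVec xs - (Φ.mulVec x₀ + w)) ^ 2 + l1norm xs ≤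
              (1 / (2 * lam)) * nrm2 (Φ.mulVec x - (Φ.mulVec x₀ + w)) ^ 2 + l1norm x) ∧
        (∀ x' : Fin N → ℝ,
          (∀ x, (1 / (2 * lam)) * nrm2 (Φ.mulVec x' - (Φ.mulVec x₀ + w)) ^ 2 + l1norm x' ≤
                (1 / (2 * lam)) * nrm2 (Φ.mulVec x - (Φ.mulVec x₀ + w)) ^ 2 + l1norm x) →
          x' = xs) ∧
        (∀ i, xs i ≠ 0 → x₀ i ≠ 0) ∧
        nrm2 (xs - x₀) ≤ C' * max lam (nrm2 w) := by
  set I := suppF x₀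
  set s : ↥I → ℝ := fun i => sgn (x₀ i)
  have hinj : Function.Injective (colsub Φ I).mulVec := Matrix.mulVec_injective_iff.mpr hli
  have hx₀ : ∀ j ∉ I, x₀ j = 0 := fun j hj => by simpa [I, suppF] using hj
  obtain ⟨m, hm, hmx₀⟩ := exists_pos_le_abs_of_ne_zero x₀
  obtain ⟨Kx, hKx, hxK⟩ := exists_nrm2_oracleSol_le (Φ := Φ) s
  obtain ⟨Kr, hKr, hrK⟩ := exists_abs_oracle_residual_le (Φ := Φ) s
  obtain ⟨C, hC, hregime⟩ := exists_pos_small_regime hIC hKx hKr hm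
  refine ⟨C, hC, Kx, hKx, fun lam w hlam hlamC hw => ?_⟩
  obtain ⟨hsmall, hres⟩ := hregime lam (nrm2 w) hlam hlamC hw
  have hxs := oracleSol_add_mulVec s lam (isUnit_det_colGram Φ I hinj) hx₀ w
  obtain ⟨hmin, huniq⟩ := oracleSol_lasso_unique_min s lam hinj (y := Φ *ᵥ x₀ + w) hlam
    (fun i => abs_sgn_le_one _)
    (fun i => by
      refine sgn_mul_eq_abs_of_abs_sub_le ?_
      rw [hxs, Pi.add_apply, add_sub_cancel_left]
      exact (abs_le_nrm2 _ _).trans <| (hxK lam hlam.le w).trans <|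
        hsmall.trans (hmx₀ i (by simpa [I, suppF] using i.2)))
    (fun j hj => by
      rw [hxs, mulVec_add, add_sub_add_left_eq_sub]
      exact (hrK lam hlam.le w j hj).trans_lt hres)
  refine ⟨_, hmin, huniq, fun i hi hx₀i => hi (oracleSol_of_notMem s lam _ (by simpa [I, suppF])),
    ?_⟩
  rw [hxs, add_sub_cancel_left]
  exact hxK lam hlam.le w
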